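/- Two elements a^s u^i v and a^p u^j v of G are conjugate if and only if s ≡ p (mod 2) and i ≡ j (mod 2). In particular there are exactly 4 conjugacy classes of elements of the form a^s u^i v, each of size 2^(l-2) k. -/

import Mathlib

namespace ZkDl

def n₁ (l : ℕ) : ℕ := 2 ^ (l - 1) + 1
def n₂ (l : ℕ) : ℕ := 2 ^ (l - 1) - 1

/-- The relations of the presentation
`⟨a, u, v | a^(2^l) = u^k = v^2 = 1, u a u⁻¹ = a^(n₁), v a v = a^(n₂), v u v = u⁻¹⟩`,
with generators `a = 0`, `u = 1`, `v = 2` in `Fin 3`. -/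
def rels (l k : ℕ) : Set (FreeGroup (Fin 3)) :=
  { FreeGroup.of 0 ^ 2 ^ l,
    FreeGroup.of 1 ^ k,
    FreeGroup.of 2 ^ 2,
    FreeGroup.of 1 * FreeGroup.of 0 * (FreeGroup.of 1)⁻¹ * (FreeGroup.of 0 ^ n₁ l)⁻¹,
    FreeGroup.of 2 * FreeGroup.of 0 * FreeGroup.of 2 * (FreeGroup.of 0 ^ n₂ l)⁻¹,
    FreeGroup.of 2 * FreeGroup.of 1 * FreeGroup.of 2 * FreeGroup.of 1 }

/-- The group `Z_{2^l} ⋊ D_k` given by the presentation above. -/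
abbrev G (l k : ℕ) : Type := PresentedGroup (rels l k)

def a (l k : ℕ) : G l k := PresentedGroup.of 0
def u (l k : ℕ) : G l k := PresentedGroup.of 1
def v (l k : ℕ) : G l k := PresentedGroup.of 2

end ZkDl

/-!
Write `k = 2 * m` and `2 ^ l = 4 * b`. Every element of `G` is `a ^ x * u ^ y * v ^ z`, and this
normal form identifies `G` with `ZMod (4 * b) × ZMod (2 * m) × ZMod 2` under a twisted
multiplication. Reducing all three coordinates mod 2 is a homomorphism onto `(ZMod 2)³`, so
conjugate elements have the same parities. Conversely, conjugating a reflection `⟨x, y, 1⟩` by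
`u ^ c` replaces `y` by `y + 2 * c`, and conjugating by `a ^ t` replaces `x` by `x + (1 - α) * t`,
where `α ∈ {n₂, n₁ * n₂ = -1}` is the multiplier by which `u ^ y * v` acts on `⟨a⟩`; since `b` is
even, `1 - α` is twice a unit, so every `x` of the right parity is reached. Hence the conjugacy
class of a reflection is its parity fibre, a coset of the kernel of the parity map, of size
`|G| / 8 = 2 ^ (l - 2) * k`.
-/

section General

lemma zpow_eq_zpow_of_modEq {α : Type*} [Group α] {g : α} {n : ℕ} (hg : g ^ n = 1) {x y : ℤ}
    (h : x ≡ y [ZMOD n]) : g ^ x = g ^ y :=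
  zpow_eq_zpow_iff_modEq.mpr
    (h.of_dvd (Int.natCast_dvd_natCast.mpr (orderOf_dvd_of_pow_eq_one hg)))

lemma pow_val_add {R : Type*} [Monoid R] {n : ℕ} [NeZero n] {r : R} (hr : r ^ n = 1)
    (p q : ZMod n) : r ^ (p + q).val = r ^ p.val * r ^ q.val := by
  rw [ZMod.val_add, ← pow_eq_pow_mod _ hr, pow_add]

lemma exists_eq_two_mul_of_castHom_eq_zero {n : ℕ} (hn : 2 ∣ n) {d : ZMod n}
    (hd : ZMod.castHom hn (ZMod 2) d = 0) : ∃ c : ZMod n, d = 2 * c := by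
  obtain ⟨c, hc⟩ : ((2 : ℕ) : ℤ) ∣ d.cast := by
    rw [← ZMod.intCast_zmod_eq_zero_iff_dvd, ← map_intCast (ZMod.castHom hn (ZMod 2)),
      ZMod.intCast_zmod_cast, hd]
  exact ⟨c, by rw [← ZMod.intCast_zmod_cast d, hc]; push_cast; rfl⟩

variable {α β : Type*} [Group α] [Group β]

lemma MulEquiv.isConj_apply_iff (e : α ≃* β) {g h : α} : IsConj (e g) (e h) ↔ IsConj g h :=
  ⟨fun hc => by simpa using e.symm.toMonoidHom.map_isConj hc, e.toMonoidHom.map_isConj⟩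

lemma MulEquiv.ncard_setOf_isConj (e : α ≃* β) (g : α) :
    {h | IsConj (e g) h}.ncard = {h | IsConj g h}.ncard := by
  rw [← Set.ncard_image_of_injective _ e.injective]
  congr 1
  ext h
  obtain ⟨h, rfl⟩ := e.surjective h
  rw [Set.mem_ofPred_eq, e.isConj_apply_iff, e.injective.mem_set_image, Set.mem_ofPred_eq]

lemma MonoidHom.ncard_setOf_apply_eq (f : α →* β) (g : α) :
    {h | f h = f g}.ncard = Nat.card f.ker := by
  have : {h | f h = f g} = (g * ·) '' (f.ker : Set α) := by
    ext h
    refine ⟨fun hh => ⟨g⁻¹ * h, by simp [show f h = f g from hh], by simp⟩, ?_⟩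
    rintro ⟨k, hk, rfl⟩
    simpa using hk
  rw [this, Set.ncard_image_of_injective _ (mul_right_injective g), ← Nat.card_coe_set_eq]
  rfl

lemma ncard_conjClasses_eq_four (r : ℤ → ℤ → α)
    (hr : ∀ s i p j, IsConj (r s i) (r p j) ↔ s ≡ p [ZMOD 2] ∧ i ≡ j [ZMOD 2]) :
    {C : ConjClasses α | ∃ s i : ℤ, C = ConjClasses.mk (r s i)}.ncard = 4 := by
  have : {C : ConjClasses α | ∃ s i : ℤ, C = ConjClasses.mk (r s i)} =
      Set.range fun q : ZMod 2 × ZMod 2 => ConjClasses.mk (r q.1.val q.2.val) := by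
    ext C
    refine ⟨?_, fun ⟨q, hq⟩ => ⟨_, _, hq.symm⟩⟩
    rintro ⟨s, i, rfl⟩
    refine ⟨(s, i), ConjClasses.mk_eq_mk_iff_isConj.mpr ((hr _ _ _ _).mpr ?_)⟩
    simp only [ZMod.val_intCast]
    exact ⟨Int.mod_modEq s 2, Int.mod_modEq i 2⟩
  rw [this, Set.ncard_range_of_injective]
  · simp
  · rintro ⟨p, q⟩ ⟨p', q'⟩ h
    obtain ⟨hp, hq⟩ := (hr _ _ _ _).mp (ConjClasses.mk_eq_mk_iff_isConj.mp h)
    simp only [Prod.mk.injEq]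
    simpa using And.intro ((ZMod.intCast_eq_intCast_iff _ _ 2).mpr hp)
      ((ZMod.intCast_eq_intCast_iff _ _ 2).mpr hq)

end General

namespace ZkDl

section Presentation

variable {l k : ℕ}

lemma a_pow_two_pow : a l k ^ 2 ^ l = 1 := by
  rw [a, PresentedGroup.of, ← map_pow]
  exact PresentedGroup.one_of_mem (by simp [rels])

lemma u_pow : u l k ^ k = 1 := by
  rw [u, PresentedGroup.of, ← map_pow]
  exact PresentedGroup.one_of_mem (by simp [rels])

lemma v_sq : v l k ^ 2 = 1 := by
  rw [v, PresentedGroup.of, ← map_pow]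
  exact PresentedGroup.one_of_mem (by simp [rels])

lemma v_inv : (v l k)⁻¹ = v l k :=
  inv_eq_of_mul_eq_one_right (by rw [← sq, v_sq])

lemma u_mul_a_mul_u_inv : u l k * a l k * (u l k)⁻¹ = a l k ^ n₁ l := by
  rw [← mul_inv_eq_one, u, a, PresentedGroup.of, PresentedGroup.of]
  simp only [← map_pow, ← map_inv, ← map_mul]
  exact PresentedGroup.one_of_mem (by simp [rels])

lemma v_mul_a_mul_v : v l k * a l k * v l k = a l k ^ n₂ l := by
  rw [← mul_inv_eq_one, v, a, PresentedGroup.of, PresentedGroup.of]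
  simp only [← map_pow, ← map_inv, ← map_mul]
  exact PresentedGroup.one_of_mem (by simp [rels])

lemma v_mul_u_mul_v : v l k * u l k * v l k = (u l k)⁻¹ := by
  rw [← mul_eq_one_iff_eq_inv, v, u, PresentedGroup.of, PresentedGroup.of]
  simp only [← map_mul]
  exact PresentedGroup.one_of_mem (by simp [rels])

lemma n₁_mul_n₁_modEq_one (hl : 2 ≤ l) : (n₁ l : ℤ) * n₁ l ≡ 1 [ZMOD (2 ^ l : ℕ)] := by
  obtain ⟨j, rfl⟩ := Nat.exists_eq_add_of_le' hl
  refine Int.modEq_iff_dvd.mpr ⟨-(2 ^ j + 1), ?_⟩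
  rw [n₁, show j + 2 - 1 = j + 1 by omega]
  push_cast
  ring

lemma u_mul_a_zpow_mul_u_inv (x : ℤ) :
    u l k * a l k ^ x * (u l k)⁻¹ = a l k ^ ((n₁ l : ℤ) * x) := by
  rw [← conj_zpow, u_mul_a_mul_u_inv, ← zpow_natCast, ← zpow_mul]

lemma u_inv_mul_a_zpow_mul_u (hl : 2 ≤ l) (x : ℤ) :
    (u l k)⁻¹ * a l k ^ x * u l k = a l k ^ ((n₁ l : ℤ) * x) := by
  have hx : a l k ^ x = a l k ^ ((n₁ l : ℤ) * (n₁ l * x)) :=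
    zpow_eq_zpow_of_modEq a_pow_two_pow (by simpa [mul_assoc] using
      ((n₁_mul_n₁_modEq_one hl).mul_right x).symm)
  rw [hx, ← u_mul_a_zpow_mul_u_inv]
  group

lemma v_mul_a_zpow_mul_v_inv (x : ℤ) :
    v l k * a l k ^ x * (v l k)⁻¹ = a l k ^ ((n₂ l : ℤ) * x) := by
  rw [← conj_zpow, v_inv, v_mul_a_mul_v, ← zpow_natCast, ← zpow_mul]

lemma v_mul_u_zpow_mul_v_inv (y : ℤ) : v l k * u l k ^ y * (v l k)⁻¹ = u l k ^ (-y) := by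
  rw [← conj_zpow, v_inv, v_mul_u_mul_v, ← zpow_neg_one, ← zpow_mul, neg_one_mul]

lemma exists_eq_zpow_mul_zpow_mul_zpow (hl : 2 ≤ l) (g : G l k) :
    ∃ x y z : ℤ, g = a l k ^ x * u l k ^ y * v l k ^ z := by
  have hg : g ∈ Subgroup.closure (Set.range PresentedGroup.of) := by simp
  induction hg using Subgroup.closure_induction_left with
  | one => exact ⟨0, 0, 0, by simp⟩
  | mul_left s hs g _ ih =>
    obtain ⟨i, rfl⟩ := hs
    obtain ⟨x, y, z, rfl⟩ := ih
    fin_cases i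
    · exact ⟨x + 1, y, z, by show a l k * _ = _; group⟩
    · refine ⟨n₁ l * x, y + 1, z, ?_⟩
      rw [← u_mul_a_zpow_mul_u_inv]
      show u l k * _ = _
      group
    · refine ⟨n₂ l * x, -y, z + 1, ?_⟩
      rw [← v_mul_a_zpow_mul_v_inv, ← v_mul_u_zpow_mul_v_inv]
      show v l k * _ = _
      group
  | inv_mul_cancel s hs g _ ih =>
    obtain ⟨i, rfl⟩ := hs
    obtain ⟨x, y, z, rfl⟩ := ih
    fin_cases i
    · exact ⟨x - 1, y, z, by show (a l k)⁻¹ * _ = _; group⟩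
    · refine ⟨n₁ l * x, y - 1, z, ?_⟩
      rw [← u_inv_mul_a_zpow_mul_u hl]
      show (u l k)⁻¹ * _ = _
      group
    · refine ⟨n₂ l * x, -y, z + 1, ?_⟩
      rw [← v_mul_a_zpow_mul_v_inv, ← v_mul_u_zpow_mul_v_inv]
      show (v l k)⁻¹ * _ = _
      conv_lhs => rw [v_inv]
      group

end Presentation

/-- `⟨x, y, z⟩` stands for `a ^ x * u ^ y * v ^ z`, with `2 ^ l = 4 * b` and `k = 2 * m`. -/
@[ext] structure Model (b m : ℕ) where
  x : ZMod (4 * b)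
  y : ZMod (2 * m)
  z : ZMod 2

namespace Model

variable {b m : ℕ}

def parityX : ZMod (4 * b) →+* ZMod 2 := ZMod.castHom (dvd_mul_of_dvd_left (by norm_num) b) _

def parityY : ZMod (2 * m) →+* ZMod 2 := ZMod.castHom (dvd_mul_right 2 m) _

def N₁ : ZMod (4 * b) := 2 * b + 1

def N₂ : ZMod (4 * b) := 2 * b - 1

lemma four_mul_b : (4 * b : ZMod (4 * b)) = 0 := by exact_mod_cast ZMod.natCast_self (4 * b)

lemma N₁_mul_self : (N₁ : ZMod (4 * b)) * N₁ = 1 := by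
  unfold N₁; linear_combination ((b : ZMod (4 * b)) + 1) * four_mul_b

lemma N₂_mul_self : (N₂ : ZMod (4 * b)) * N₂ = 1 := by
  unfold N₂; linear_combination ((b : ZMod (4 * b)) - 1) * four_mul_b

lemma N₁_mul_N₂ : (N₁ : ZMod (4 * b)) * N₂ = -1 := by
  unfold N₁ N₂; linear_combination (b : ZMod (4 * b)) * four_mul_b

/-- The multiplier by which `u ^ p * v ^ q` acts on `⟨a⟩`. -/
def twist (p q : ZMod 2) : ZMod (4 * b) := N₁ ^ p.val * N₂ ^ q.val

def sign (z : ZMod 2) : ZMod (2 * m) := (-1) ^ z.val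

@[simp] lemma twist_add (p p' q q' : ZMod 2) :
    (twist (p + p') (q + q') : ZMod (4 * b)) = twist p q * twist p' q' := by
  simp only [twist, pow_val_add ((sq _).trans N₁_mul_self), pow_val_add ((sq _).trans N₂_mul_self)]
  ring

@[simp] lemma twist_zero : (twist 0 0 : ZMod (4 * b)) = 1 := by simp [twist]

@[simp] lemma twist_one_zero : (twist 1 0 : ZMod (4 * b)) = N₁ := by simp [twist, ZMod.val_one]

@[simp] lemma twist_zero_one : (twist 0 1 : ZMod (4 * b)) = N₂ := by simp [twist, ZMod.val_one]

@[simp] lemma twist_one_one : (twist 1 1 : ZMod (4 * b)) = -1 := by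
  simp [twist, ZMod.val_one, N₁_mul_N₂]

@[simp] lemma sign_add (z z' : ZMod 2) : (sign (z + z') : ZMod (2 * m)) = sign z * sign z' :=
  pow_val_add (by ring) z z'

@[simp] lemma sign_zero : (sign 0 : ZMod (2 * m)) = 1 := by simp [sign]

@[simp] lemma sign_one : (sign 1 : ZMod (2 * m)) = -1 := by simp [sign, ZMod.val_one]

@[simp] lemma parityX_twist (p q : ZMod 2) : parityX (twist p q : ZMod (4 * b)) = 1 := by
  simp [twist, N₁, N₂, map_ofNat, show (2 : ZMod 2) = 0 from rfl]

@[simp] lemma parityY_sign (z : ZMod 2) : parityY (sign z : ZMod (2 * m)) = 1 := by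
  simp [sign, CharTwo.neg_eq]

instance : One (Model b m) := ⟨⟨0, 0, 0⟩⟩

instance : Mul (Model b m) :=
  ⟨fun g h => ⟨g.x + twist (parityY g.y) g.z * h.x, g.y + sign g.z * h.y, g.z + h.z⟩⟩

instance : Inv (Model b m) :=
  ⟨fun g => ⟨-(twist (parityY g.y) g.z * g.x), -(sign g.z * g.y), g.z⟩⟩

@[simp] lemma one_x : (1 : Model b m).x = 0 := rfl
@[simp] lemma one_y : (1 : Model b m).y = 0 := rfl
@[simp] lemma one_z : (1 : Model b m).z = 0 := rfl
@[simp] lemma mul_x (g h : Model b m) : (g * h).x = g.x + twist (parityY g.y) g.z * h.x := rfl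
@[simp] lemma mul_y (g h : Model b m) : (g * h).y = g.y + sign g.z * h.y := rfl
@[simp] lemma mul_z (g h : Model b m) : (g * h).z = g.z + h.z := rfl
@[simp] lemma inv_x (g : Model b m) : g⁻¹.x = -(twist (parityY g.y) g.z * g.x) := rfl
@[simp] lemma inv_y (g : Model b m) : g⁻¹.y = -(sign g.z * g.y) := rfl
@[simp] lemma inv_z (g : Model b m) : g⁻¹.z = g.z := rfl

instance : Group (Model b m) :=
  Group.ofLeftAxioms
    (fun g h k => by ext <;> simp <;> ring)
    (fun g => by ext <;> simp)
    (fun g => by ext <;> simp [CharTwo.add_self_eq_zero])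

def parity : Model b m →* Multiplicative (ZMod 2 × ZMod 2 × ZMod 2) where
  toFun g := .ofAdd (parityX g.x, parityY g.y, g.z)
  map_one' := by simp
  map_mul' g h := by simp; rfl

lemma parity_eq_parity_iff {g h : Model b m} :
    parity g = parity h ↔ parityX g.x = parityX h.x ∧ parityY g.y = parityY h.y ∧ g.z = h.z := by
  simp [parity]

lemma parity_surjective : Function.Surjective (parity : Model b m →* _) := by
  intro t
  refine ⟨⟨(t.toAdd.1.val : ZMod (4 * b)), (t.toAdd.2.1.val : ZMod (2 * m)), t.toAdd.2.2⟩, ?_⟩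
  simp [parity]

lemma mk_x_zpow (x : ℤ) : (⟨1, 0, 0⟩ : Model b m) ^ x = ⟨x, 0, 0⟩ := by
  induction x using Int.induction_on with
  | zero => ext <;> simp
  | succ n ih => rw [zpow_add_one, ih]; ext <;> simp
  | pred n ih => rw [zpow_sub_one, ih]; ext <;> simp; ring

lemma mk_y_zpow (y : ℤ) : (⟨0, 1, 0⟩ : Model b m) ^ y = ⟨0, y, 0⟩ := by
  induction y using Int.induction_on with
  | zero => ext <;> simp
  | succ n ih => rw [zpow_add_one, ih]; ext <;> simp
  | pred n ih => rw [zpow_sub_one, ih]; ext <;> simp; ring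

lemma mk_z_zpow (z : ℤ) : (⟨0, 0, 1⟩ : Model b m) ^ z = ⟨0, 0, z⟩ := by
  induction z using Int.induction_on with
  | zero => ext <;> simp
  | succ n ih => rw [zpow_add_one, ih]; ext <;> simp
  | pred n ih => rw [zpow_sub_one, ih]; ext <;> simp [CharTwo.sub_eq_add]

lemma exists_one_sub_twist_mul_eq (hb : Even b) (p : ZMod 2) (e : ZMod (4 * b)) :
    ∃ t, (1 - twist p 1) * t = 2 * e := by
  rcases (by decide : ∀ p : ZMod 2, p = 0 ∨ p = 1) p with rfl | rfl
  · -- `(1 - b) * (1 + b) * (1 + b ^ 2) = 1 - b ^ 4`, and `4 * b ∣ b ^ 4` as `b` is even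
    obtain ⟨r, rfl⟩ := hb
    have h : (4 * (r + r) : ZMod (4 * (r + r))) = 0 := by exact_mod_cast four_mul_b
    refine ⟨(1 + (r + r)) * (1 + (r + r) ^ 2) * e, ?_⟩
    simp only [twist_zero_one, N₂]
    push_cast
    linear_combination (-4 * r ^ 3 * e) * h
  · exact ⟨e, by simp; ring⟩

lemma mk_y_mul_mul_inv (c : ZMod (2 * m)) {g : Model b m} (hg : g.z = 1) :
    ⟨0, c, 0⟩ * g * (⟨0, c, 0⟩ : Model b m)⁻¹ = ⟨twist (parityY c) 0 * g.x, g.y + 2 * c, 1⟩ := by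
  ext <;> simp [hg]; ring

lemma mk_x_mul_mul_inv (t : ZMod (4 * b)) {g : Model b m} (hg : g.z = 1) :
    ⟨t, 0, 0⟩ * g * (⟨t, 0, 0⟩ : Model b m)⁻¹ =
      ⟨g.x + (1 - twist (parityY g.y) 1) * t, g.y, 1⟩ := by
  ext <;> simp [hg]; ring

lemma isConj_iff_parity_eq (hb : Even b) {g h : Model b m} (hg : g.z = 1) (hh : h.z = 1) :
    IsConj g h ↔ parity g = parity h := by
  refine ⟨fun hc => isConj_iff_eq.mp (parity.map_isConj hc), fun hp => ?_⟩
  obtain ⟨hx, hy, -⟩ := parity_eq_parity_iff.mp hp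
  obtain ⟨c, hc⟩ := exists_eq_two_mul_of_castHom_eq_zero _
    (show parityY (h.y - g.y) = 0 by rw [map_sub, hy, sub_self])
  obtain ⟨e, he⟩ := exists_eq_two_mul_of_castHom_eq_zero _
    (show parityX (h.x - twist (parityY c) 0 * g.x) = 0 by simp [hx])
  obtain ⟨t, ht⟩ := exists_one_sub_twist_mul_eq hb (parityY h.y) e
  have hy' : g.y + 2 * c = h.y := by rw [← hc, add_sub_cancel]
  refine (isConj_iff.mpr ⟨⟨0, c, 0⟩, mk_y_mul_mul_inv c hg⟩).trans
    (isConj_iff.mpr ⟨⟨t, 0, 0⟩, ?_⟩)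
  rw [mk_x_mul_mul_inv t rfl]
  ext
  · simp only [hy', ht, ← he, add_sub_cancel]
  · exact hy'
  · exact hh.symm

lemma setOf_isConj_eq (hb : Even b) {g : Model b m} (hg : g.z = 1) :
    {h | IsConj g h} = {h | parity h = parity g} := by
  ext h
  refine ⟨fun hc => (isConj_iff_eq.mp (parity.map_isConj hc)).symm, fun hp => ?_⟩
  exact (isConj_iff_parity_eq hb hg ((parity_eq_parity_iff.mp hp).2.2.trans hg)).mpr hp.symm

lemma card_model : Nat.card (Model b m) = 4 * b * (2 * m * 2) := by
  rw [Nat.card_congr ⟨fun g => (g.x, g.y, g.z), fun p => ⟨p.1, p.2.1, p.2.2⟩, fun _ => rfl,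
    fun _ => rfl⟩]
  simp

lemma card_ker_parity : Nat.card (parity : Model b m →* _).ker = b * (2 * m) := by
  have h := Subgroup.card_eq_card_quotient_mul_card_subgroup (parity : Model b m →* _).ker
  rw [card_model, Nat.card_congr (QuotientGroup.quotientKerEquivOfSurjective _
    parity_surjective).toEquiv, show Nat.card (Multiplicative (ZMod 2 × ZMod 2 × ZMod 2)) = 8 by
      simp] at h
  linarith

end Model

section ModelEquiv

open Model

variable {l b m : ℕ}

lemma two_pow_pred_eq (hb : 2 ^ l = 4 * b) : 2 ^ (l - 1) = 2 * b := by
  rcases l with _ | l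
  · omega
  · rw [pow_succ] at hb
    simp only [Nat.add_sub_cancel]
    omega

lemma two_le_of_two_pow_eq (hb : 2 ^ l = 4 * b) : 2 ≤ l := by
  by_contra h
  interval_cases l <;> omega

lemma cast_n₁ (hb : 2 ^ l = 4 * b) : (n₁ l : ZMod (4 * b)) = N₁ := by
  rw [n₁, two_pow_pred_eq hb, N₁]
  push_cast
  rfl

lemma cast_n₂ (hb : 2 ^ l = 4 * b) : (n₂ l : ZMod (4 * b)) = N₂ := by
  rw [n₂, two_pow_pred_eq hb, N₂, Nat.cast_sub (by have := Nat.two_pow_pos l; omega)]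
  push_cast
  rfl

lemma lift_rels_eq_one (hb : 2 ^ l = 4 * b) :
    ∀ r ∈ rels l (2 * m),
      FreeGroup.lift ![(⟨1, 0, 0⟩ : Model b m), ⟨0, 1, 0⟩, ⟨0, 0, 1⟩] r = 1 := by
  have hx : ∀ n : ℕ, (⟨1, 0, 0⟩ : Model b m) ^ n = ⟨n, 0, 0⟩ := fun n => by
    simpa using mk_x_zpow (b := b) (m := m) n
  have hy : ∀ n : ℕ, (⟨0, 1, 0⟩ : Model b m) ^ n = ⟨0, n, 0⟩ := fun n => by
    simpa using mk_y_zpow (b := b) (m := m) n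
  have hz : ∀ n : ℕ, (⟨0, 0, 1⟩ : Model b m) ^ n = ⟨0, 0, n⟩ := fun n => by
    simpa using mk_z_zpow (b := b) (m := m) n
  rintro r (rfl | rfl | rfl | rfl | rfl | rfl) <;>
    simp only [map_mul, map_inv, map_pow, FreeGroup.lift_apply_of, Matrix.cons_val, hx, hy, hz]
    <;> ext <;> simp [hb, cast_n₁ hb, cast_n₂ hb, CharTwo.two_eq_zero, CharTwo.add_self_eq_zero]

def toModel (hb : 2 ^ l = 4 * b) : G l (2 * m) →* Model b m :=
  PresentedGroup.toGroup (lift_rels_eq_one hb)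

lemma toModel_zpow_mul_zpow_mul_zpow (hb : 2 ^ l = 4 * b) (x y z : ℤ) :
    toModel hb (a l (2 * m) ^ x * u l (2 * m) ^ y * v l (2 * m) ^ z) = ⟨x, y, z⟩ := by
  simp only [toModel, a, u, v, map_mul, map_zpow, PresentedGroup.toGroup.of, Matrix.cons_val,
    mk_x_zpow, mk_y_zpow, mk_z_zpow]
  ext <;> simp

lemma toModel_bijective (hb : 2 ^ l = 4 * b) : Function.Bijective (toModel (m := m) hb) := by
  refine ⟨fun g g' h => ?_, fun g => ?_⟩
  · obtain ⟨x, y, z, rfl⟩ := exists_eq_zpow_mul_zpow_mul_zpow (two_le_of_two_pow_eq hb) g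
    obtain ⟨x', y', z', rfl⟩ := exists_eq_zpow_mul_zpow_mul_zpow (two_le_of_two_pow_eq hb) g'
    simp only [toModel_zpow_mul_zpow_mul_zpow, Model.mk.injEq, ZMod.intCast_eq_intCast_iff] at h
    obtain ⟨hx, hy, hz⟩ := h
    rw [zpow_eq_zpow_of_modEq (hb ▸ a_pow_two_pow) hx, zpow_eq_zpow_of_modEq u_pow hy,
      zpow_eq_zpow_of_modEq v_sq hz]
  · exact ⟨_, (toModel_zpow_mul_zpow_mul_zpow hb g.x.cast g.y.cast g.z.cast).trans (by simp)⟩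

noncomputable def modelEquiv (hb : 2 ^ l = 4 * b) : G l (2 * m) ≃* Model b m :=
  MulEquiv.ofBijective (toModel hb) (toModel_bijective hb)

end ModelEquiv

section Reflections

open Model

variable {l b m : ℕ}

lemma modelEquiv_reflection (hb : 2 ^ l = 4 * b) (s i : ℤ) :
    modelEquiv hb (a l (2 * m) ^ s * u l (2 * m) ^ i * v l (2 * m)) = ⟨s, i, 1⟩ := by
  have := toModel_zpow_mul_zpow_mul_zpow (m := m) hb s i 1
  rwa [zpow_one, Int.cast_one] at this

lemma isConj_reflection_iff (hb : 2 ^ l = 4 * b) (hbe : Even b) (s i p j : ℤ) :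
    IsConj (a l (2 * m) ^ s * u l (2 * m) ^ i * v l (2 * m))
        (a l (2 * m) ^ p * u l (2 * m) ^ j * v l (2 * m)) ↔
      s ≡ p [ZMOD 2] ∧ i ≡ j [ZMOD 2] := by
  rw [← (modelEquiv hb).isConj_apply_iff, modelEquiv_reflection, modelEquiv_reflection,
    isConj_iff_parity_eq hbe rfl rfl, parity_eq_parity_iff]
  simp [ZMod.intCast_eq_intCast_iff]

lemma ncard_setOf_isConj_reflection (hb : 2 ^ l = 4 * b) (hbe : Even b) (s i : ℤ) :
    {y | IsConj (a l (2 * m) ^ s * u l (2 * m) ^ i * v l (2 * m)) y}.ncard = b * (2 * m) := by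
  rw [← (modelEquiv hb).ncard_setOf_isConj, modelEquiv_reflection, setOf_isConj_eq hbe rfl,
    MonoidHom.ncard_setOf_apply_eq, card_ker_parity]

end Reflections
end ZkDl

open ZkDl

theorem conj_class_reflections (l k : ℕ) (hl : 3 ≤ l) (hk : 4 ∣ k) :
    (∀ s i p j : ℤ,
      (IsConj (a l k ^ s * u l k ^ i * v l k) (a l k ^ p * u l k ^ j * v l k) ↔
        (s ≡ p [ZMOD 2] ∧ i ≡ j [ZMOD 2]))) ∧
    {C : ConjClasses (G l k) |
        ∃ s i : ℤ, C = ConjClasses.mk (a l k ^ s * u l k ^ i * v l k)}.ncard = 4 ∧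
    (∀ s i : ℤ,
      {y : G l k | IsConj (a l k ^ s * u l k ^ i * v l k) y}.ncard = 2 ^ (l - 2) * k) := by
  obtain ⟨t, rfl⟩ := hk
  have hb : 2 ^ l = 4 * 2 ^ (l - 2) := by
    rw [show 4 = 2 ^ 2 by rfl, ← pow_add]
    congr 1
    omega
  have hbe : Even (2 ^ (l - 2)) := (Nat.even_pow' (by omega)).mpr even_two
  rw [show 4 * t = 2 * (2 * t) by ring]
  refine ⟨isConj_reflection_iff hb hbe, ncard_conjClasses_eq_four _ (isConj_reflection_iff hb hbe),
    ncard_setOf_isConj_reflection hb hbe⟩
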